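/- arXiv:2305.15672 — 5 statements merged into one kernel-verified Lean document; each statement's English description precedes it below -/
import Mathlib

section
/- Let m, n ≥ 1 be integers and let G_{m,n} = Gp⟨x, y | x^m y^n x^m y^{-n} = 1⟩ be the corresponding presented group. Let K_{m,n} be the subgroup of G_{m,n} generated by y^{2n} together with the elements y^i x y^{-i} for 0 ≤ i ≤ 2n−1. Then the assignment β ↦ y^{2n} and α_i ↦ y^i x y^{-i} (0 ≤ i ≤ 2n−1) induces a group isomorphism from the presented group Gp⟨β, α_0, …, α_{2n−1} | α_i^m α_{i+n}^m = 1 and α_i^m β = β α_i^m for 0 ≤ i ≤ n−1⟩ onto K_{m,n}. -/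
/-!
Extend the generators of `K_{m,n}` to all `k ∈ ℤ` by `α_{2nq+i} := β^q α_i β^{-q}`. The relations
of `K_{m,n}` make `σ_d : α_k ↦ α_{k+d}, β ↦ β` an automorphism for every `d`, and `σ_{2n}` is
conjugation by `β`; this mirrors conjugation by `y` on the elements `y^k x y^{-k}` of `G_{m,n}`.
So `x ↦ α_0, y ↦ t` defines `G_{m,n} → K ⋊_σ ℤ`, and composed with `K → G_{m,n}` it sends
`α_i ↦ α_i` and `β ↦ t^{2n}`. That composite factors as `K → K ⋊_{conj β} ℤ → K ⋊_σ ℤ`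
(`β ↦ t`, then `t ↦ t^{2n}`); the second map is injective and the first has the retraction
`(k, t^p) ↦ k β^p`, so `K → G_{m,n}` is injective.
-/

/-- The single relator `x^m y^n x^m y^{-n}` of the group `G_{m,n}`, where `x` is the
generator `0` and `y` is the generator `1`. -/
def gmnRels (m n : ℕ) : Set (FreeGroup (Fin 2)) :=
  {(FreeGroup.of 0) ^ m * (FreeGroup.of 1) ^ n * (FreeGroup.of 0) ^ m *
    ((FreeGroup.of 1) ^ n)⁻¹}

/-- The one-relator group `G_{m,n} = Gp⟨x, y | x^m y^n x^m y^{-n} = 1⟩`. -/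
abbrev Gmn (m n : ℕ) := PresentedGroup (gmnRels m n)

/-- The generator `x` of `G_{m,n}`. -/
def Gmn.x (m n : ℕ) : Gmn m n := PresentedGroup.of 0

/-- The generator `y` of `G_{m,n}`. -/
def Gmn.y (m n : ℕ) : Gmn m n := PresentedGroup.of 1

/-- Relators of the presentation
`Gp⟨β, α_0, …, α_{2n−1} | α_i^m α_{i+n}^m = 1, α_i^m β = β α_i^m (0 ≤ i ≤ n−1)⟩`,
with `none` playing the role of `β` and `some i` the role of `α_i`. -/
def kRels (m n : ℕ) : Set (FreeGroup (Option (Fin (2 * n)))) :=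
  {r | ∃ i : Fin n,
    r = (FreeGroup.of (some ⟨i.val, by have := i.isLt; omega⟩)) ^ m *
        (FreeGroup.of (some ⟨i.val + n, by have := i.isLt; omega⟩)) ^ m ∨
    r = (FreeGroup.of (some ⟨i.val, by have := i.isLt; omega⟩)) ^ m * FreeGroup.of none *
        (FreeGroup.of none * (FreeGroup.of (some ⟨i.val, by have := i.isLt; omega⟩)) ^ m)⁻¹}

open SemidirectProduct

namespace SemidirectProduct

variable {N G : Type*} [Group N] [Group G] {φ : G →* MulAut N}

theorem commute_inl_inr {x : N} {g : G} (h : φ g x = x) :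
    Commute (inl x : N ⋊[φ] G) (inr g) := by
  have h' := inl_aut (φ := φ) g x
  rw [h, map_inv] at h'
  exact (mul_inv_eq_iff_eq_mul.mp h'.symm).symm

theorem map_injective {N₂ G₂ : Type*} [Group N₂] [Group G₂] {φ₂ : G₂ →* MulAut N₂}
    {fn : N →* N₂} {fg : G →* G₂}
    {h : ∀ g, fn.comp (φ g).toMonoidHom = (φ₂ (fg g)).toMonoidHom.comp fn}
    (hn : Function.Injective fn) (hg : Function.Injective fg) :
    Function.Injective (map fn fg h) := fun _ _ hxy =>
  SemidirectProduct.ext (hn (congrArg left hxy)) (hg (congrArg right hxy))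

end SemidirectProduct

section ZpowersConj

variable {N : Type*} [Group N]

def zpowersConj (b : N) : Multiplicative ℤ →* MulAut N := MulAut.conj.comp (zpowersHom N b)

def zpowersConjRetract (b : N) : N ⋊[zpowersConj b] Multiplicative ℤ →* N :=
  lift (MonoidHom.id N) (zpowersHom N b) fun _ => rfl

@[simp]
theorem zpowersConjRetract_inl (b x : N) : zpowersConjRetract b (inl x) = x := lift_inl ..

@[simp]
theorem zpowersConjRetract_inr (b : N) (p : Multiplicative ℤ) : zpowersConjRetract b (inr p) = b ^ p.toAdd := lift_inr ..

def zpowersConjMap (φ : Multiplicative ℤ →* MulAut N) {k : ℤ} {b : N}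
    (h : φ (.ofAdd k) = MulAut.conj b) :
    N ⋊[zpowersConj b] Multiplicative ℤ →* N ⋊[φ] Multiplicative ℤ :=
  map (MonoidHom.id N) (zpowersHom _ (.ofAdd k)) fun g => by
    ext x
    simp [zpowersConj, map_zpow, h]

theorem zpowersConjMap_injective (φ : Multiplicative ℤ →* MulAut N) {k : ℤ} {b : N}
    (h : φ (.ofAdd k) = MulAut.conj b) (hk : k ≠ 0) :
    Function.Injective (zpowersConjMap φ h) :=
  map_injective Function.injective_id fun d e hde => by
    have := congrArg Multiplicative.toAdd hde
    simp only [zpowersHom_apply, toAdd_zpow, toAdd_ofAdd, smul_eq_mul] at this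
    exact Multiplicative.toAdd.injective (mul_right_cancel₀ hk this)

end ZpowersConj

namespace Gmn

variable {m n : ℕ}

theorem relator_eq_one : x m n ^ m * y m n ^ n * x m n ^ m * (y m n ^ n)⁻¹ = 1 :=
  PresentedGroup.one_of_mem (Set.mem_singleton _)

theorem commute_x_pow_y_pow_two_mul : Commute (x m n ^ m) (y m n ^ (2 * n)) := by
  have h : y m n ^ n * x m n ^ m * (y m n ^ n)⁻¹ = (x m n ^ m)⁻¹ :=
    eq_inv_of_mul_eq_one_right <| by rw [← relator_eq_one]; group
  have h₂ : y m n ^ (2 * n) * x m n ^ m * (y m n ^ (2 * n))⁻¹ = x m n ^ m := by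
    calc _ = y m n ^ n * (y m n ^ n * x m n ^ m * (y m n ^ n)⁻¹) * (y m n ^ n)⁻¹ := by
          rw [two_mul, pow_add]; group
      _ = x m n ^ m := by rw [h, ← conj_inv, h, inv_inv]
  exact (mul_inv_eq_iff_eq_mul.mp h₂).symm

variable {H : Type*} [Group H]

def lift (a b : H) (h : a ^ m * b ^ n * a ^ m * (b ^ n)⁻¹ = 1) : Gmn m n →* H :=
  PresentedGroup.toGroup (f := ![a, b]) <| by
    rintro r rfl
    simpa using h

variable (a b : H) (h : a ^ m * b ^ n * a ^ m * (b ^ n)⁻¹ = 1)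

@[simp]
theorem lift_x : lift a b h (x m n) = a := PresentedGroup.toGroup.of _

@[simp]
theorem lift_y : lift a b h (y m n) = b := PresentedGroup.toGroup.of _

end Gmn

abbrev Kmn (m n : ℕ) := PresentedGroup (kRels m n)

namespace Kmn

variable {m n : ℕ}

abbrev b (m n : ℕ) : Kmn m n := PresentedGroup.of none

abbrev a (m : ℕ) {n : ℕ} (i : Fin (2 * n)) : Kmn m n := PresentedGroup.of (some i)

theorem a_pow_mul_a_pow {i j : Fin (2 * n)} (hij : i.val + n = j.val) :
    a m i ^ m * a m j ^ m = 1 := by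
  obtain ⟨j, hj⟩ := j
  subst hij
  exact PresentedGroup.one_of_mem ⟨⟨i, by omega⟩, Or.inl rfl⟩

theorem commute_a_pow_b_of_lt {i : Fin (2 * n)} (hi : i.val < n) :
    Commute (a m i ^ m) (b m n) :=
  mul_inv_eq_one.mp <| PresentedGroup.one_of_mem ⟨⟨i, hi⟩, Or.inr rfl⟩

theorem commute_a_pow_b (i : Fin (2 * n)) : Commute (a m i ^ m) (b m n) := by
  by_cases hi : i.val < n
  · exact commute_a_pow_b_of_lt hi
  · have hj : (i.val - n) + n = i.val := by omega
    rw [← inv_eq_of_mul_eq_one_right (a_pow_mul_a_pow (i := ⟨i.val - n, by omega⟩) hj)]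
    exact (commute_a_pow_b_of_lt (by dsimp only; omega)).inv_left

variable {H : Type*} [Group H]

def lift (β : H) (α : Fin (2 * n) → H)
    (h₁ : ∀ i j : Fin (2 * n), i.val + n = j.val → α i ^ m * α j ^ m = 1)
    (h₂ : ∀ i : Fin (2 * n), i.val < n → Commute (α i ^ m) β) : Kmn m n →* H :=
  PresentedGroup.toGroup (f := fun o => o.elim β α) <| by
    rintro r ⟨i, rfl | rfl⟩
    · simpa using h₁ _ _ rfl
    · simp only [map_mul, map_pow, map_inv, FreeGroup.lift_apply_of, Option.elim]
      exact mul_inv_eq_one.mpr (h₂ _ i.isLt).eq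

variable (β : H) (α : Fin (2 * n) → H)
    (h₁ : ∀ i j : Fin (2 * n), i.val + n = j.val → α i ^ m * α j ^ m = 1)
    (h₂ : ∀ i : Fin (2 * n), i.val < n → Commute (α i ^ m) β)

@[simp]
theorem lift_b : lift β α h₁ h₂ (b m n) = β := PresentedGroup.toGroup.of _

@[simp]
theorem lift_a (i : Fin (2 * n)) : lift β α h₁ h₂ (a m i) = α i := PresentedGroup.toGroup.of _

theorem hom_ext {f g : Kmn m n →* H} (hb : f (b m n) = g (b m n))
    (ha : ∀ i, f (a m i) = g (a m i)) : f = g :=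
  PresentedGroup.ext fun o => o.rec hb ha

section Shift

variable [NeZero n]

theorem two_mul_pos (n : ℕ) [NeZero n] : (0 : ℤ) < 2 * n := by have := NeZero.pos n; omega

def emodTwoMul (n : ℕ) [NeZero n] (k : ℤ) : Fin (2 * n) :=
  ⟨(k % (2 * n)).toNat, by
    have := Int.emod_lt_of_pos k (two_mul_pos n); have := Int.emod_nonneg k (two_mul_pos n).ne'
    omega⟩

theorem exists_eq_two_mul_add (k : ℤ) : ∃ q : ℤ, ∃ i : Fin (2 * n), k = 2 * n * q + i := by
  refine ⟨k / (2 * n), emodTwoMul n k, ?_⟩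
  have := Int.emod_nonneg k (two_mul_pos n).ne'
  simp [emodTwoMul, Int.toNat_of_nonneg this, Int.mul_ediv_add_emod]

def aInt (m n : ℕ) [NeZero n] (k : ℤ) : Kmn m n :=
  b m n ^ (k / (2 * n)) * a m (emodTwoMul n k) * (b m n ^ (k / (2 * n)))⁻¹

theorem aInt_two_mul_add (q : ℤ) (i : Fin (2 * n)) :
    aInt m n (2 * n * q + i) = b m n ^ q * a m i * (b m n ^ q)⁻¹ := by
  have hi : (0 : ℤ) ≤ i ∧ (i : ℤ) < 2 * n := by omega
  have hq : (2 * n * q + i : ℤ) / (2 * n) = q := by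
    rw [add_comm, Int.add_mul_ediv_left _ _ (two_mul_pos n).ne', Int.ediv_eq_zero_of_lt hi.1 hi.2,
      zero_add]
  have hr : emodTwoMul n (2 * n * q + i) = i := by
    ext
    change ((2 * n * q + i : ℤ) % (2 * n)).toNat = i
    rw [add_comm, Int.add_mul_emod_self_left, Int.emod_eq_of_lt hi.1 hi.2, Int.toNat_natCast]
  rw [aInt, hq, hr]

theorem aInt_natCast (i : Fin (2 * n)) : aInt m n (i : ℤ) = a m i := by
  simpa using aInt_two_mul_add (m := m) 0 i

theorem aInt_add_two_mul (k p : ℤ) :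
    aInt m n (k + 2 * n * p) = b m n ^ p * aInt m n k * (b m n ^ p)⁻¹ := by
  obtain ⟨q, i, rfl⟩ := exists_eq_two_mul_add (n := n) k
  rw [show 2 * n * q + i + 2 * n * p = 2 * n * (p + q) + i by ring, aInt_two_mul_add,
    aInt_two_mul_add, zpow_add]
  group

theorem aInt_two_mul_add_pow (q : ℤ) (i : Fin (2 * n)) :
    aInt m n (2 * n * q + i) ^ m = a m i ^ m := by
  rw [aInt_two_mul_add, conj_pow]
  exact ((commute_a_pow_b i).zpow_right q).symm.mul_inv_cancel

theorem commute_aInt_pow_b (k : ℤ) : Commute (aInt m n k ^ m) (b m n) := by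
  obtain ⟨q, i, rfl⟩ := exists_eq_two_mul_add (n := n) k
  rw [aInt_two_mul_add_pow]
  exact commute_a_pow_b i

theorem aInt_pow_mul_aInt_add_pow (k : ℤ) : aInt m n k ^ m * aInt m n (k + n) ^ m = 1 := by
  obtain ⟨q, i, rfl⟩ := exists_eq_two_mul_add (n := n) k
  rw [aInt_two_mul_add_pow]
  by_cases hi : i.val < n
  · rw [show 2 * n * q + i + n = 2 * n * q + ((⟨i + n, by omega⟩ : Fin (2 * n)) : ℕ) by
      push_cast; ring, aInt_two_mul_add_pow]
    exact a_pow_mul_a_pow rfl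
  · rw [show 2 * n * q + i + n = 2 * n * (q + 1) + ((⟨i - n, by omega⟩ : Fin (2 * n)) : ℕ) by
      push_cast [Nat.cast_sub (not_lt.mp hi)]; ring, aInt_two_mul_add_pow]
    exact mul_eq_one_comm.mp (a_pow_mul_a_pow (by dsimp only; omega))

def shift (m n : ℕ) [NeZero n] (d : ℤ) : Kmn m n →* Kmn m n :=
  lift (b m n) (fun i => aInt m n (i + d))
    (fun i j hij => by
      rw [← hij, Nat.cast_add, add_right_comm]
      exact aInt_pow_mul_aInt_add_pow _)
    (fun _ _ => commute_aInt_pow_b _)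

theorem shift_b (d : ℤ) : shift m n d (b m n) = b m n := lift_b ..

theorem shift_a (d : ℤ) (i : Fin (2 * n)) : shift m n d (a m i) = aInt m n (i + d) := lift_a ..

theorem shift_aInt (d k : ℤ) : shift m n d (aInt m n k) = aInt m n (k + d) := by
  obtain ⟨q, i, rfl⟩ := exists_eq_two_mul_add (n := n) k
  rw [aInt_two_mul_add, map_mul, map_mul, map_inv, map_zpow, shift_b, shift_a,
    show 2 * n * q + i + d = i + d + 2 * n * q by ring, aInt_add_two_mul]

theorem shift_zero : shift m n 0 = MonoidHom.id (Kmn m n) :=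
  hom_ext (shift_b 0) fun i => by rw [shift_a, add_zero, aInt_natCast]; rfl

theorem shift_add (d e : ℤ) : shift m n (d + e) = (shift m n d).comp (shift m n e) :=
  hom_ext (by simp [shift_b]) fun i => by simp [shift_a, shift_aInt, add_assoc, add_comm e]

def shiftAct (m n : ℕ) [NeZero n] : Multiplicative ℤ →* MulAut (Kmn m n) where
  toFun d := (shift m n d.toAdd).toMulEquiv (shift m n (-d.toAdd))
    (by rw [← shift_add, neg_add_cancel, shift_zero])
    (by rw [← shift_add, add_neg_cancel, shift_zero])
  map_one' := MulEquiv.toMonoidHom_injective shift_zero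
  map_mul' d e := MulEquiv.toMonoidHom_injective (shift_add d.toAdd e.toAdd)

theorem shiftAct_apply (d : Multiplicative ℤ) (g : Kmn m n) :
    shiftAct m n d g = shift m n d.toAdd g := rfl

theorem shiftAct_ofAdd_two_mul : shiftAct m n (.ofAdd (2 * n)) = MulAut.conj (b m n) := by
  refine MulEquiv.toMonoidHom_injective (hom_ext ?_ fun i => ?_)
  · simp only [MulEquiv.coe_toMonoidHom, shiftAct_apply, toAdd_ofAdd, shift_b, MulAut.conj_apply]
    group
  · simp only [MulEquiv.coe_toMonoidHom, shiftAct_apply, toAdd_ofAdd, shift_a, MulAut.conj_apply]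
    simpa [aInt_natCast] using aInt_add_two_mul (m := m) (n := n) i 1

end Shift

def toGmn (m n : ℕ) : Kmn m n →* Gmn m n :=
  lift (Gmn.y m n ^ (2 * n)) (fun i => Gmn.y m n ^ (i : ℕ) * Gmn.x m n * (Gmn.y m n ^ (i : ℕ))⁻¹)
    (fun i j hij => by
      have h := congrArg (MulAut.conj (Gmn.y m n ^ (i : ℕ))) Gmn.relator_eq_one
      rw [map_one, MulAut.conj_apply] at h
      rw [conj_pow, conj_pow, ← hij, pow_add, ← h]
      group)
    (fun i _ => by
      rw [conj_pow]
      simpa only [(Commute.pow_pow_self (Gmn.y m n) (i : ℕ) (2 * n)).mul_inv_cancel] using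
        Gmn.commute_x_pow_y_pow_two_mul.conj (Gmn.y m n ^ (i : ℕ)))

theorem toGmn_b : toGmn m n (b m n) = Gmn.y m n ^ (2 * n) := lift_b ..

theorem toGmn_a (i : Fin (2 * n)) :
    toGmn m n (a m i) = Gmn.y m n ^ (i : ℕ) * Gmn.x m n * (Gmn.y m n ^ (i : ℕ))⁻¹ := lift_a ..

theorem toGmn_range : (toGmn m n).range = Subgroup.closure
    (insert ((Gmn.y m n) ^ (2 * n))
      {g | ∃ i : Fin (2 * n),
        g = (Gmn.y m n) ^ (i : ℕ) * Gmn.x m n * ((Gmn.y m n) ^ (i : ℕ))⁻¹}) := by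
  rw [MonoidHom.range_eq_map, ← PresentedGroup.closure_range_of, MonoidHom.map_closure,
    ← Set.range_comp, Option.range_eq, Function.comp_apply, toGmn_b]
  congr 1
  ext g
  simp [toGmn_a, eq_comm]

variable [NeZero n]

def toConjProd (m n : ℕ) [NeZero n] : Kmn m n →* Kmn m n ⋊[zpowersConj (b m n)] Multiplicative ℤ :=
  lift (inr (.ofAdd 1)) (fun i => inl (a m i))
    (fun i j hij => by rw [← map_pow, ← map_pow, ← map_mul, a_pow_mul_a_pow hij, map_one])
    (fun i hi => by
      rw [← map_pow]
      refine commute_inl_inr ?_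
      simpa [zpowersConj] using (commute_a_pow_b_of_lt hi).symm.mul_inv_cancel)

theorem zpowersConjRetract_comp_toConjProd : (zpowersConjRetract (b m n)).comp (toConjProd m n) = MonoidHom.id _ :=
  hom_ext (by simp [toConjProd]) fun i => by simp [toConjProd]

def toShiftProd (m n : ℕ) [NeZero n] : Gmn m n →* Kmn m n ⋊[shiftAct m n] Multiplicative ℤ :=
  Gmn.lift (inl (a m ⟨0, by have := NeZero.pos n; omega⟩)) (inr (.ofAdd 1)) <| by
    -- `y^n` acts as `σ_n`, so the relator becomes `inl (α_0^m α_n^m)`.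
    rw [← map_pow, ← map_pow, mul_assoc, mul_assoc, ← map_inv, ← mul_assoc (inr _), ← inl_aut,
      ← map_mul, shiftAct_apply, map_pow, shift_a]
    refine (congrArg inl ?_).trans (map_one _)
    simpa [← aInt_natCast] using aInt_pow_mul_aInt_add_pow (m := m) (n := n) 0

theorem toShiftProd_conj (i : Fin (2 * n)) :
    toShiftProd m n (Gmn.y m n ^ (i : ℕ) * Gmn.x m n * (Gmn.y m n ^ (i : ℕ))⁻¹) = inl (a m i) := by
  rw [toShiftProd, map_mul, map_mul, map_inv, map_pow, Gmn.lift_x, Gmn.lift_y, ← map_pow,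
    ← map_inv, ← inl_aut, shiftAct_apply, shift_a]
  simp [aInt_natCast]

theorem toShiftProd_comp_toGmn :
    (toShiftProd m n).comp (toGmn m n) =
      (zpowersConjMap (shiftAct m n) shiftAct_ofAdd_two_mul).comp (toConjProd m n) := by
  refine hom_ext ?_ fun i => ?_
  · simp only [MonoidHom.comp_apply, toGmn_b, toShiftProd, toConjProd, zpowersConjMap, map_pow,
      Gmn.lift_y, lift_b, map_inr, zpowersHom_apply, toAdd_ofAdd, zpow_one]
    rw [← map_pow, ← ofAdd_nsmul, nsmul_one, Nat.cast_mul, Nat.cast_ofNat]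
  · simp [toGmn_a, toShiftProd_conj, toConjProd, zpowersConjMap]

theorem toGmn_injective : Function.Injective (toGmn m n) := by
  refine Function.Injective.of_comp (f := toShiftProd m n) ?_
  rw [← MonoidHom.coe_comp, toShiftProd_comp_toGmn, MonoidHom.coe_comp]
  exact (zpowersConjMap_injective _ _ (by have := NeZero.pos n; omega)).comp
    (Function.LeftInverse.injective (g := zpowersConjRetract (b m n))
      (DFunLike.congr_fun zpowersConjRetract_comp_toConjProd))

end Kmn

theorem kmn_presentation_general (m n : ℕ) (hn : 1 ≤ n) :
    ∃ φ : PresentedGroup (kRels m n) →* Gmn m n,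
      Function.Injective φ ∧
      φ.range = Subgroup.closure
        (insert ((Gmn.y m n) ^ (2 * n))
          {g | ∃ i : Fin (2 * n),
            g = (Gmn.y m n) ^ (i : ℕ) * Gmn.x m n * ((Gmn.y m n) ^ (i : ℕ))⁻¹}) ∧
      φ (PresentedGroup.of none) = (Gmn.y m n) ^ (2 * n) ∧
      ∀ i : Fin (2 * n), φ (PresentedGroup.of (some i)) =
        (Gmn.y m n) ^ (i : ℕ) * Gmn.x m n * ((Gmn.y m n) ^ (i : ℕ))⁻¹ := by
  have : NeZero n := ⟨by omega⟩
  exact ⟨Kmn.toGmn m n, Kmn.toGmn_injective, Kmn.toGmn_range, Kmn.toGmn_b, Kmn.toGmn_a⟩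

/-- The subgroup `K_{m,n}` of `G_{m,n}` generated by `y^{2n}` together with the elements
`y^i x y^{-i}` for `0 ≤ i ≤ 2n − 1` is isomorphic to the presented group
`Gp⟨β, α_0, …, α_{2n−1} | α_i^m α_{i+n}^m = 1, α_i^m β = β α_i^m (0 ≤ i ≤ n−1)⟩`
via `β ↦ y^{2n}`, `α_i ↦ y^i x y^{-i}`. -/
theorem kmn_presentation (m n : ℕ) (hm : 1 ≤ m) (hn : 1 ≤ n) :
    ∃ φ : PresentedGroup (kRels m n) →* Gmn m n,
      Function.Injective φ ∧
      φ.range = Subgroup.closure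
        (insert ((Gmn.y m n) ^ (2 * n))
          {g | ∃ i : Fin (2 * n),
            g = (Gmn.y m n) ^ (i : ℕ) * Gmn.x m n * ((Gmn.y m n) ^ (i : ℕ))⁻¹}) ∧
      φ (PresentedGroup.of none) = (Gmn.y m n) ^ (2 * n) ∧
      ∀ i : Fin (2 * n), φ (PresentedGroup.of (some i)) =
        (Gmn.y m n) ^ (i : ℕ) * Gmn.x m n * ((Gmn.y m n) ^ (i : ℕ))⁻¹ :=
  kmn_presentation_general m n hn
end

section
/- Let m, n ≥ 1 be integers, let G_{m,n} = Gp⟨x, y | x^m y^n x^m y^{-n} = 1⟩, and let B(S_{n,m}) = Gp⟨d, c_0, …, c_{n−1} | c_i^m d = d c_i^m for 0 ≤ i ≤ n−1⟩. Then the assignment d ↦ y^{2n} and c_i ↦ y^i x y^{-i} (0 ≤ i ≤ n−1) induces an injective group homomorphism σ : B(S_{n,m}) → G_{m,n}. -/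
/-- Relators of `B(S_{n,m}) = Gp⟨d, c_0, …, c_{n−1} | c_i^m d = d c_i^m (0 ≤ i ≤ n−1)⟩`,
with `none` playing the role of `d` and `some i` the role of `c_i`. -/
def bsRels (m n : ℕ) : Set (FreeGroup (Option (Fin n))) :=
  {r | ∃ i : Fin n,
    r = (FreeGroup.of (some i)) ^ m * FreeGroup.of none *
        (FreeGroup.of none * (FreeGroup.of (some i)) ^ m)⁻¹}

namespace BsAux

variable (m n : ℕ)

/-- The group `B(S_{n,m})`. -/
abbrev B := PresentedGroup (bsRels m n)

/-- The generator `d` of `B`. -/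
def bd : B m n := PresentedGroup.of none

/-- The generators `c i` of `B`. -/
def bc (i : Fin n) : B m n := PresentedGroup.of (some i)

lemma bc_pow_comm (i : Fin n) : bc m n i ^ m * bd m n = bd m n * bc m n i ^ m := by
  have h1 : PresentedGroup.mk (bsRels m n) ((FreeGroup.of (some i)) ^ m * FreeGroup.of none *
      (FreeGroup.of none * (FreeGroup.of (some i)) ^ m)⁻¹) = 1 := by
    apply (QuotientGroup.eq_one_iff _).mpr
    exact Subgroup.subset_normalClosure ⟨i, rfl⟩
  simp only [map_mul, map_inv, map_pow] at h1
  rw [mul_inv_eq_one] at h1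
  exact h1

lemma gmn_rel : (Gmn.x m n) ^ m * (Gmn.y m n) ^ n * (Gmn.x m n) ^ m *
    ((Gmn.y m n) ^ n)⁻¹ = 1 := by
  have h1 : PresentedGroup.mk (gmnRels m n) ((FreeGroup.of 0) ^ m * (FreeGroup.of 1) ^ n *
      (FreeGroup.of 0) ^ m * ((FreeGroup.of 1) ^ n)⁻¹) = 1 := by
    apply (QuotientGroup.eq_one_iff _).mpr
    exact Subgroup.subset_normalClosure rfl
  simp only [map_mul, map_inv, map_pow] at h1
  exact h1

lemma x_pow_comm : (Gmn.x m n) ^ m * (Gmn.y m n) ^ (2 * n)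
    = (Gmn.y m n) ^ (2 * n) * (Gmn.x m n) ^ m := by
  set X := Gmn.x m n
  set Y := Gmn.y m n
  have h1 : X ^ m * Y ^ n * X ^ m = Y ^ n := by
    have := gmn_rel m n
    rwa [mul_inv_eq_one] at this
  have h3 : (X ^ m)⁻¹ * Y ^ n = Y ^ n * X ^ m := by
    conv_lhs => rw [← h1]
    group
  have h4 : X ^ m * Y ^ n = Y ^ n * (X ^ m)⁻¹ := by
    have := congrArg (fun z => z * (X ^ m)⁻¹) h1
    simpa [mul_assoc] using this
  calc X ^ m * Y ^ (2 * n) = X ^ m * Y ^ n * Y ^ n := by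
        rw [two_mul, pow_add, mul_assoc]
    _ = Y ^ n * ((X ^ m)⁻¹ * Y ^ n) := by rw [h4, mul_assoc]
    _ = Y ^ n * (Y ^ n * X ^ m) := by rw [h3]
    _ = Y ^ (2 * n) * X ^ m := by rw [two_mul, pow_add, mul_assoc]

/-- The map defining `σ`. -/
def fσ : Option (Fin n) → Gmn m n
  | none => (Gmn.y m n) ^ (2 * n)
  | some i => (Gmn.y m n) ^ (i : ℕ) * Gmn.x m n * ((Gmn.y m n) ^ (i : ℕ))⁻¹

lemma hσ : ∀ r ∈ bsRels m n, FreeGroup.lift (fσ m n) r = 1 := by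
  rintro r ⟨i, rfl⟩
  simp only [map_mul, map_inv, map_pow, FreeGroup.lift_apply_of]
  rw [mul_inv_eq_one]
  show fσ m n (some i) ^ m * fσ m n none = fσ m n none * fσ m n (some i) ^ m
  set X := Gmn.x m n
  set Y := Gmn.y m n
  have hconj : fσ m n (some i) ^ m = Y ^ (i : ℕ) * X ^ m * (Y ^ (i : ℕ))⁻¹ := conj_pow
  rw [hconj]
  show Y ^ (i : ℕ) * X ^ m * (Y ^ (i : ℕ))⁻¹ * Y ^ (2 * n)
      = Y ^ (2 * n) * (Y ^ (i : ℕ) * X ^ m * (Y ^ (i : ℕ))⁻¹)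
  have c1 : Commute (Y ^ (2 * n)) (Y ^ (i : ℕ)) := (Commute.refl Y).pow_pow _ _
  have c2 : Commute (Y ^ (2 * n)) (X ^ m) := (x_pow_comm m n).symm
  exact ((c1.mul_right c2).mul_right c1.inv_right).symm.eq

/-- `σ : B → G`. -/
def σhom : B m n →* Gmn m n := PresentedGroup.toGroup (hσ m n)

/-! ### The wreath-type target group -/

/-- Shift automorphism of the direct power of `B`. -/
def shiftA (k : ZMod (2 * n)) : MulAut (ZMod (2 * n) → B m n) where
  toFun f := fun j => f (j + k)
  invFun f := fun j => f (j - k)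
  left_inv f := funext fun j => congrArg f (by ring)
  right_inv f := funext fun j => congrArg f (by ring)
  map_mul' f g := rfl

/-- Shift action of `ZMod (2n)`. -/
def φW : Multiplicative (ZMod (2 * n)) →* MulAut (ZMod (2 * n) → B m n) where
  toFun k := shiftA m n (Multiplicative.toAdd k)
  map_one' := by
    ext f j
    exact congrArg f (add_zero j)
  map_mul' a b := by
    ext f j
    exact congrArg f (by rw [toAdd_mul]; ring)

/-- The wreath-type group `W`. -/
abbrev W := (ZMod (2 * n) → B m n) ⋊[φW m n] Multiplicative (ZMod (2 * n))

lemma φW_apply (k : Multiplicative (ZMod (2 * n))) (g : ZMod (2 * n) → B m n)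
    (j : ZMod (2 * n)) : φW m n k g j = g (j + Multiplicative.toAdd k) := rfl

/-- The image of `x`. -/
def fX : ZMod (2 * n) → B m n := fun j =>
  if h : j.val < n then bc m n ⟨j.val, h⟩
  else if h2 : j.val - n < n then (bc m n ⟨j.val - n, h2⟩)⁻¹ else 1

/-- Left part of the image of `y`. -/
def fYf : ZMod (2 * n) → B m n := fun j => if j.val = 2 * n - 1 then bd m n else 1

def Xw : W m n := SemidirectProduct.inl (fX m n)

def Yw : W m n := ⟨fYf m n, Multiplicative.ofAdd 1⟩

/-- Left part of powers of `Yw`. -/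
def FY (k : ℕ) : ZMod (2 * n) → B m n := fun j => if 2 * n - k ≤ j.val then bd m n else 1

lemma mod_eq (a b : ℕ) (hb : 0 < b) (ha : a < 2 * b) :
    a % b = if a < b then a else a - b := by
  split_ifs with h
  · exact Nat.mod_eq_of_lt h
  · rw [Nat.mod_eq_sub_mod (le_of_not_gt h), Nat.mod_eq_of_lt (by omega)]

lemma Yw_pow (hn : 1 ≤ n) : ∀ k, k ≤ 2 * n →
    Yw m n ^ k = ⟨FY m n k, Multiplicative.ofAdd ((k : ℕ) : ZMod (2 * n))⟩ := by
  haveI : NeZero (2 * n) := ⟨by omega⟩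
  intro k hk
  induction k with
  | zero =>
    rw [pow_zero]
    refine SemidirectProduct.ext ?_ ?_
    · funext j
      have hval : j.val < 2 * n := ZMod.val_lt j
      show (1 : B m n) = if 2 * n - 0 ≤ j.val then bd m n else 1
      rw [if_neg (by omega)]
    · show (1 : Multiplicative (ZMod (2 * n)))
        = Multiplicative.ofAdd ((0 : ℕ) : ZMod (2 * n))
      simp
  | succ k ih =>
    have hk2 : k < 2 * n := by omega
    rw [pow_succ, ih (by omega)]
    show (⟨FY m n k * φW m n (Multiplicative.ofAdd ((k : ℕ) : ZMod (2 * n))) (fYf m n),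
        _ * _⟩ : W m n) = _
    congr 1
    · funext j
      have hval : j.val < 2 * n := ZMod.val_lt j
      have hjk : (j + ((k : ℕ) : ZMod (2 * n))).val = (j.val + k) % (2 * n) := by
        rw [ZMod.val_add, ZMod.val_natCast, Nat.mod_eq_of_lt hk2]
      rw [Pi.mul_apply, φW_apply]
      show FY m n k j * fYf m n (j + _) = FY m n (k + 1) j
      unfold FY fYf
      rw [toAdd_ofAdd, hjk, mod_eq _ _ (by omega) (by omega)]
      split_ifs <;> first
        | (exfalso; omega) | rw [mul_one] | rw [one_mul] | simp
    · show Multiplicative.ofAdd ((k : ℕ) : ZMod (2 * n)) * Multiplicative.ofAdd 1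
        = Multiplicative.ofAdd (((k + 1 : ℕ)) : ZMod (2 * n))
      rw [← ofAdd_add]
      push_cast
      rfl

end BsAux

namespace BsAux

lemma fX_eq_of_lt (m n : ℕ) (j : ZMod (2 * n)) (w : ℕ) (hw : j.val = w) (h : w < n) :
    fX m n j = bc m n ⟨w, h⟩ := by
  subst hw
  exact dif_pos h

lemma fX_eq_of_ge (m n : ℕ) (j : ZMod (2 * n)) (w : ℕ) (h1 : n ≤ j.val)
    (hw : j.val - n = w) (h2 : w < n) : fX m n j = (bc m n ⟨w, h2⟩)⁻¹ := by
  subst hw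
  unfold fX
  rw [dif_neg (by omega), dif_pos]

lemma FY_eq_bd (m n : ℕ) (k : ℕ) (j : ZMod (2 * n)) (h : 2 * n - k ≤ j.val) :
    FY m n k j = bd m n := if_pos h

lemma FY_eq_one (m n : ℕ) (k : ℕ) (j : ZMod (2 * n)) (h : ¬ (2 * n - k ≤ j.val)) :
    FY m n k j = 1 := if_neg h

lemma Xw_pow (m n : ℕ) : Xw m n ^ m = SemidirectProduct.inl (fX m n ^ m) := by
  rw [Xw, ← map_pow]

lemma main_rel (m n : ℕ) (hn : 1 ≤ n) :
    Xw m n ^ m * Yw m n ^ n * Xw m n ^ m * (Yw m n ^ n)⁻¹ = 1 := by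
  haveI : NeZero (2 * n) := ⟨by omega⟩
  rw [mul_inv_eq_one, Yw_pow m n hn n (by omega), Xw_pow]
  refine SemidirectProduct.ext ?_ ?_
  · simp only [SemidirectProduct.mul_left, SemidirectProduct.mul_right,
      SemidirectProduct.left_inl, SemidirectProduct.right_inl, map_one, MulAut.one_apply,
      one_mul]
    funext j
    have hval : j.val < 2 * n := ZMod.val_lt j
    rw [Pi.mul_apply, Pi.mul_apply, φW_apply, toAdd_ofAdd, Pi.pow_apply, Pi.pow_apply]
    have hjn : (j + ((n : ℕ) : ZMod (2 * n))).val = (j.val + n) % (2 * n) := by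
      rw [ZMod.val_add, ZMod.val_natCast, Nat.mod_eq_of_lt (show n < 2 * n by omega)]
    rcases lt_or_ge j.val n with hv | hv
    · have hjn2 : (j + ((n : ℕ) : ZMod (2 * n))).val = j.val + n := by
        rw [hjn, Nat.mod_eq_of_lt (by omega)]
      rw [fX_eq_of_lt m n j j.val rfl hv,
        fX_eq_of_ge m n _ j.val (by omega) (by omega) hv,
        FY_eq_one m n n j (by omega), mul_one, inv_pow, mul_inv_cancel]
    · have hjn2 : (j + ((n : ℕ) : ZMod (2 * n))).val = j.val - n := by
        rw [hjn, mod_eq _ _ (by omega) (by omega)]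
        rw [if_neg (by omega)]
        omega
      rw [fX_eq_of_ge m n j (j.val - n) hv rfl (by omega),
        fX_eq_of_lt m n _ (j.val - n) hjn2 (by omega),
        FY_eq_bd m n n j (by omega), inv_pow, mul_assoc,
        ← bc_pow_comm m n ⟨j.val - n, by omega⟩, ← mul_assoc, inv_mul_cancel, one_mul]
  · simp only [SemidirectProduct.mul_left, SemidirectProduct.mul_right,
      SemidirectProduct.left_inl, SemidirectProduct.right_inl, one_mul, mul_one]

/-- The map defining `Φ`. -/
def fΦ (m n : ℕ) : Fin 2 → W m n := ![Xw m n, Yw m n]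

lemma hΦ (m n : ℕ) (hn : 1 ≤ n) : ∀ r ∈ gmnRels m n, FreeGroup.lift (fΦ m n) r = 1 := by
  rintro r hr
  rw [gmnRels, Set.mem_singleton_iff] at hr
  subst hr
  simp only [map_mul, map_inv, map_pow, FreeGroup.lift_apply_of]
  show Xw m n ^ m * Yw m n ^ n * Xw m n ^ m * (Yw m n ^ n)⁻¹ = 1
  exact main_rel m n hn

/-- The monomial representation `Φ : G → W`. -/
def Φ (m n : ℕ) (hn : 1 ≤ n) : Gmn m n →* W m n := PresentedGroup.toGroup (hΦ m n hn)

lemma Φ_x (m n : ℕ) (hn : 1 ≤ n) : Φ m n hn (Gmn.x m n) = Xw m n := by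
  show PresentedGroup.toGroup _ (PresentedGroup.of 0) = _
  rw [PresentedGroup.toGroup.of]
  rfl

lemma Φ_y (m n : ℕ) (hn : 1 ≤ n) : Φ m n hn (Gmn.y m n) = Yw m n := by
  show PresentedGroup.toGroup _ (PresentedGroup.of 1) = _
  rw [PresentedGroup.toGroup.of]
  rfl

lemma σ_none (m n : ℕ) : σhom m n (PresentedGroup.of none) = (Gmn.y m n) ^ (2 * n) := by
  show PresentedGroup.toGroup _ (PresentedGroup.of none) = _
  rw [PresentedGroup.toGroup.of]
  rfl

lemma σ_some (m n : ℕ) (i : Fin n) : σhom m n (PresentedGroup.of (some i)) =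
    (Gmn.y m n) ^ (i : ℕ) * Gmn.x m n * ((Gmn.y m n) ^ (i : ℕ))⁻¹ := by
  show PresentedGroup.toGroup _ (PresentedGroup.of (some i)) = _
  rw [PresentedGroup.toGroup.of]
  rfl

lemma right_one (m n : ℕ) (hn : 1 ≤ n) (b : B m n) :
    (Φ m n hn (σhom m n b)).right = 1 := by
  haveI : NeZero (2 * n) := ⟨by omega⟩
  have hcomp : (SemidirectProduct.rightHom.comp ((Φ m n hn).comp (σhom m n)))
      = (1 : B m n →* Multiplicative (ZMod (2 * n))) := by
    apply PresentedGroup.ext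
    intro z
    cases z with
    | none =>
      show SemidirectProduct.rightHom (Φ m n hn (σhom m n (PresentedGroup.of none))) = 1
      rw [σ_none, map_pow, Φ_y, map_pow]
      show (Multiplicative.ofAdd (1 : ZMod (2 * n))) ^ (2 * n) = 1
      rw [← ofAdd_nsmul, nsmul_eq_mul, mul_one, ZMod.natCast_self, ofAdd_zero]
    | some i =>
      show SemidirectProduct.rightHom (Φ m n hn (σhom m n (PresentedGroup.of (some i)))) = 1
      rw [σ_some]
      simp [map_mul, map_inv, map_pow, Φ_x, Φ_y, SemidirectProduct.rightHom_inl,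
        SemidirectProduct.rightHom_eq_right, SemidirectProduct.right_inl, Xw]
  have := DFunLike.congr_fun hcomp b
  simpa [SemidirectProduct.rightHom_eq_right] using this

end BsAux

open BsAux in
/-- The assignment `d ↦ y^{2n}`, `c_i ↦ y^i x y^{-i}` (for `0 ≤ i ≤ n−1`) induces an injective
group homomorphism `σ : B(S_{n,m}) → G_{m,n}`. -/
theorem bs_injects_in_gmn (m n : ℕ) (hm : 1 ≤ m) (hn : 1 ≤ n) :
    ∃ σ : PresentedGroup (bsRels m n) →* Gmn m n,
      Function.Injective σ ∧
      σ (PresentedGroup.of none) = (Gmn.y m n) ^ (2 * n) ∧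
      ∀ i : Fin n, σ (PresentedGroup.of (some i)) =
        (Gmn.y m n) ^ (i : ℕ) * Gmn.x m n * ((Gmn.y m n) ^ (i : ℕ))⁻¹ := by
  refine ⟨σhom m n, ?_, σ_none m n, σ_some m n⟩
  haveI : NeZero (2 * n) := ⟨by omega⟩
  set Φ' := Φ m n hn with hΦ'
  have hμmul : ∀ a b : B m n, (Φ' (σhom m n (a * b))).left 0
      = (Φ' (σhom m n a)).left 0 * (Φ' (σhom m n b)).left 0 := by
    intro a b
    rw [map_mul, map_mul, SemidirectProduct.mul_left, right_one m n hn a, map_one,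
      MulAut.one_apply, Pi.mul_apply]
  let μ : B m n →* B m n :=
    { toFun := fun bb => (Φ' (σhom m n bb)).left 0
      map_one' := by
        show (Φ' (σhom m n 1)).left 0 = 1
        rw [map_one, map_one]
        rfl
      map_mul' := hμmul }
  have hμ : ∀ bb : B m n, μ bb = bb := by
    have hid : μ = MonoidHom.id (B m n) := by
      apply PresentedGroup.ext
      intro z
      cases z with
      | none =>
        show (Φ' (σhom m n (PresentedGroup.of none))).left 0 = PresentedGroup.of none
        rw [σ_none, map_pow, hΦ', Φ_y, Yw_pow m n hn (2 * n) le_rfl]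
        show FY m n (2 * n) 0 = PresentedGroup.of none
        rw [FY_eq_bd m n (2 * n) 0 (by rw [ZMod.val_zero]; omega)]
        rfl
      | some i =>
        show (Φ' (σhom m n (PresentedGroup.of (some i)))).left 0 = PresentedGroup.of (some i)
        rw [σ_some, map_mul, map_mul, map_inv, map_pow, hΦ', Φ_x, Φ_y,
          Yw_pow m n hn (i : ℕ) (by omega)]
        simp only [Xw, SemidirectProduct.mul_left, SemidirectProduct.inv_left,
          SemidirectProduct.mul_right, SemidirectProduct.inv_right,
          SemidirectProduct.left_inl, SemidirectProduct.right_inl, mul_one,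
          Pi.mul_apply, φW_apply, toAdd_ofAdd, Pi.inv_apply, toAdd_inv]
        have h0 : ((0 : ZMod (2 * n)) + ((i : ℕ) : ZMod (2 * n))
            + -((i : ℕ) : ZMod (2 * n))) = 0 := by ring
        rw [h0]
        have hFY0 : FY m n (i : ℕ) 0 = 1 := by
          apply FY_eq_one
          rw [ZMod.val_zero]
          have := i.isLt
          omega
        rw [hFY0, one_mul, inv_one, mul_one]
        have hival : ((0 : ZMod (2 * n)) + ((i : ℕ) : ZMod (2 * n))).val = (i : ℕ) := by
          rw [zero_add, ZMod.val_natCast, Nat.mod_eq_of_lt (by omega)]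
        rw [fX_eq_of_lt m n _ (i : ℕ) hival i.isLt]
        show bc m n ⟨(i : ℕ), i.isLt⟩ = PresentedGroup.of (some i)
        rw [Fin.eta]
        rfl
    intro bb
    rw [hid]
    rfl
  intro a b hab
  calc a = μ a := (hμ a).symm
    _ = μ b := by
        show (Φ' (σhom m n a)).left 0 = (Φ' (σhom m n b)).left 0
        rw [hab]
    _ = b := hμ b
end

section
/- Let m, n ≥ 1 be integers. Then the assignment x ↦ b a^n, y ↦ a induces a group isomorphism from G_{m,n} = Gp⟨x, y | x^m y^n x^m y^{-n} = 1⟩ onto the positive one-relator group M_{m,n} = Gp⟨a, b | (b a^n)^m (a^n b)^m = 1⟩. In particular, G_{m,n} is a positive one-relator group. -/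
/-- The single positive relator `(b a^n)^m (a^n b)^m` of `M_{m,n}`, where `a` is the
generator `0` and `b` is the generator `1`. -/
def mmnRels (m n : ℕ) : Set (FreeGroup (Fin 2)) :=
  {(FreeGroup.of 1 * (FreeGroup.of 0) ^ n) ^ m *
    ((FreeGroup.of 0) ^ n * FreeGroup.of 1) ^ m}

/-- The positive one-relator group `M_{m,n} = Gp⟨a, b | (b a^n)^m (a^n b)^m = 1⟩`. -/
abbrev Mmn (m n : ℕ) := PresentedGroup (mmnRels m n)

/-- The generator `a` of `M_{m,n}`. -/
def Mmn.a (m n : ℕ) : Mmn m n := PresentedGroup.of 0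

/-- The generator `b` of `M_{m,n}`. -/
def Mmn.b (m n : ℕ) : Mmn m n := PresentedGroup.of 1

/-! The Nielsen automorphism `x ↦ b a^n`, `y ↦ a` of the free group on two generators
(inverse `a ↦ y`, `b ↦ x y^{-n}`) carries the relator of `G_{m,n}` onto that of `M_{m,n}`
already in the free group: since `a^n (b a^n) = (a^n b) a^n`, it sends `x^m y^n x^m y^{-n}`
to `(b a^n)^m (a^n b)^m a^n a^{-n}`. A free-group automorphism matching the relators induces
an isomorphism of the presented groups. -/

namespace PresentedGroup

variable {α β : Type*} {s : Set (FreeGroup α)} {t : Set (FreeGroup β)}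

def congr (e : FreeGroup α ≃* FreeGroup β) (h : e '' s = t) :
    PresentedGroup s ≃* PresentedGroup t :=
  QuotientGroup.congr _ _ e <| h ▸ Subgroup.map_normalClosure s e.toMonoidHom e.surjective

theorem congr_mk (e : FreeGroup α ≃* FreeGroup β) (h : e '' s = t) (w : FreeGroup α) :
    congr e h (mk s w) = mk t (e w) :=
  rfl

end PresentedGroup

open FreeGroup (of lift ext_hom)

def gmnFreeEquiv (n : ℕ) : FreeGroup (Fin 2) ≃* FreeGroup (Fin 2) :=
  MonoidHom.toMulEquiv (lift ![of 1 * of 0 ^ n, of 0]) (lift ![of 1, of 0 * (of 1 ^ n)⁻¹])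
    (ext_hom _ _ fun i => by fin_cases i <;> simp)
    (ext_hom _ _ fun i => by fin_cases i <;> simp)

theorem gmnFreeEquiv_of_zero (n : ℕ) : gmnFreeEquiv n (of 0) = of 1 * of 0 ^ n := by
  simp [gmnFreeEquiv]

theorem gmnFreeEquiv_of_one (n : ℕ) : gmnFreeEquiv n (of 1) = of 0 := by
  simp [gmnFreeEquiv]

theorem mul_pow_mul_mul_pow_mul_inv {G : Type*} [Group G] (c d : G) (m : ℕ) :
    (c * d) ^ m * d * (c * d) ^ m * d⁻¹ = (c * d) ^ m * (d * c) ^ m := by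
  have hconj : SemiconjBy d ((c * d) ^ m) ((d * c) ^ m) :=
    SemiconjBy.pow_right (mul_assoc d c d).symm m
  rw [mul_assoc _ d, hconj.eq, ← mul_assoc, mul_inv_cancel_right]

theorem gmnFreeEquiv_image_gmnRels (m n : ℕ) : gmnFreeEquiv n '' gmnRels m n = mmnRels m n := by
  rw [gmnRels, mmnRels, Set.image_singleton]
  simp only [map_mul, map_pow, map_inv, gmnFreeEquiv_of_zero, gmnFreeEquiv_of_one]
  exact congrArg _ (mul_pow_mul_mul_pow_mul_inv _ _ m)

theorem gmn_is_positive_one_relator_general (m n : ℕ) :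
    ∃ e : Gmn m n ≃* Mmn m n,
      e (Gmn.x m n) = Mmn.b m n * (Mmn.a m n) ^ n ∧
      e (Gmn.y m n) = Mmn.a m n := by
  refine ⟨PresentedGroup.congr (gmnFreeEquiv n) (gmnFreeEquiv_image_gmnRels m n), ?_, ?_⟩
  · rw [Gmn.x, PresentedGroup.of, PresentedGroup.congr_mk, gmnFreeEquiv_of_zero]
    rfl
  · rw [Gmn.y, PresentedGroup.of, PresentedGroup.congr_mk, gmnFreeEquiv_of_one]
    rfl

/-- For `m, n ≥ 1`, the assignment `x ↦ b a^n`, `y ↦ a` induces a group isomorphism from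
`G_{m,n} = Gp⟨x, y | x^m y^n x^m y^{-n} = 1⟩` onto the positive one-relator group
`M_{m,n} = Gp⟨a, b | (b a^n)^m (a^n b)^m = 1⟩`; in particular `G_{m,n}` is a positive
one-relator group. -/
theorem gmn_is_positive_one_relator (m n : ℕ) (hm : 1 ≤ m) (hn : 1 ≤ n) :
    ∃ e : Gmn m n ≃* Mmn m n,
      e (Gmn.x m n) = Mmn.b m n * (Mmn.a m n) ^ n ∧
      e (Gmn.y m n) = Mmn.a m n :=
  gmn_is_positive_one_relator_general m n
end

section
/- Let M be a left-cancellative monoid (for all x, y, z ∈ M, x·y = x·z implies y = z) generated by a finite alphabet Σ via a surjective evaluation homomorphism eval : Σ* → M. Suppose there exist regular languages L, K, L̄ ⊆ Σ*, a surjective map from L onto L̄ written l ↦ l̄, and a fixed word w ∈ Σ*, such that: (i) eval(l̄ · l · w) = eval(w) for all l ∈ L, and (ii) the predicate on natural numbers i given by 'there exist l ∈ L and k ∈ K with eval(l · wⁱ) = eval(k)' is not computable. Then membership in the rational subset eval(L̄ · K) of M is undecidable: the predicate on words u ∈ Σ* given by eval(u) ∈ eval(L̄ · K) is not computable, where L̄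 · K denotes the concatenation language {l̄ · k : l̄ ∈ L̄, k ∈ K}. -/
/-- The `i`-fold concatenation of a word with itself. -/
def listPow {σ : Type*} (w : List σ) (i : ℕ) : List σ :=
  (List.replicate i w).flatten

/-- Let `M` be a left-cancellative monoid generated by a finite alphabet via a surjective
evaluation map.  Suppose there are regular languages `L, K, L̄`, a surjective map
`l ↦ l̄` from `L` onto `L̄` and a fixed word `w` such that (i) `eval(l̄ l w) = eval(w)`
for all `l ∈ L`, and (ii) it is undecidable whether, for a given `i`, there is a pair
`(l, k) ∈ L × K` with `eval(l wⁱ) = eval(k)`.  Then membership in the rational subset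
`eval(L̄ K)` of `M` is undecidable. -/
theorem undecidable_rational_subset_criterion
    (σk : ℕ) (M : Type) [Monoid M]
    (hcancel : ∀ x y z : M, x * y = x * z → y = z)
    (gen : Fin σk → M)
    (hsurj : Function.Surjective fun w : List (Fin σk) => (w.map gen).prod)
    (L K Lbar : Language (Fin σk))
    (hLreg : L.IsRegular) (hKreg : K.IsRegular) (hLbarreg : Lbar.IsRegular)
    (bar : List (Fin σk) → List (Fin σk))
    (hbar_mem : ∀ l ∈ L, bar l ∈ Lbar)
    (hbar_surj : ∀ x ∈ Lbar, ∃ l ∈ L, bar l = x)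
    (w : List (Fin σk))
    (hfix : ∀ l ∈ L, ((bar l ++ l ++ w).map gen).prod = (w.map gen).prod)
    (hund : ¬ ComputablePred fun i : ℕ =>
      ∃ l ∈ L, ∃ x ∈ K, ((l ++ listPow w i).map gen).prod = (x.map gen).prod) :
    ¬ ComputablePred fun u : List (Fin σk) =>
      (u.map gen).prod ∈
        (fun v : List (Fin σk) => (v.map gen).prod) '' (Lbar * K) := by
  classical
  intro h
  apply hund
  set E : List (Fin σk) → M := fun v => (v.map gen).prod with hE
  have Eapp : ∀ a b : List (Fin σk), E (a ++ b) = E a * E b := by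
    intro a b; simp [hE]
  have hwsucc : ∀ i, listPow w (i + 1) = w ++ listPow w i := by
    intro i; simp [listPow, List.replicate_succ]
  -- the key equivalence
  have key : ∀ i : ℕ,
      (∃ l ∈ L, ∃ x ∈ K, E (l ++ listPow w (i + 1)) = E x) ↔
        E (listPow w (i + 1)) ∈ E '' (Lbar * K) := by
    intro i
    have compute : ∀ l ∈ L, E (bar l) * E (l ++ listPow w (i + 1)) = E (listPow w (i + 1)) := by
      intro l hl
      have hfix' : E (bar l ++ l ++ w) = E w := hfix l hl
      rw [hwsucc, ← Eapp, ← List.append_assoc, ← List.append_assoc, Eapp, hfix', Eapp]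
    constructor
    · rintro ⟨l, hl, k, hk, heq⟩
      refine ⟨bar l ++ k, Language.append_mem_mul (hbar_mem l hl) hk, ?_⟩
      show E (bar l ++ k) = _
      rw [Eapp, ← heq, compute l hl]
    · rintro ⟨v, hv, heqv⟩
      obtain ⟨a, ha, k, hk, rfl⟩ := Language.mem_mul.mp hv
      obtain ⟨l, hl, rfl⟩ := hbar_surj a ha
      refine ⟨l, hl, k, hk, hcancel (E (bar l)) _ _ ?_⟩
      rw [compute l hl, ← Eapp]
      exact heqv.symm
  -- computability transfer
  obtain ⟨f, hf, hfp⟩ := ComputablePred.computable_iff.mp h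
  -- g i = listPow w i is computable
  have hg : Computable fun i : ℕ => listPow w i := by
    have : Computable fun i : ℕ =>
        Nat.rec (motive := fun _ => List (Fin σk)) ([] : List (Fin σk))
          (fun _ IH => w ++ IH) i := by
      exact Computable.nat_rec Computable.id (Computable.const [])
        ((Primrec.list_append.comp (Primrec.const w)
          (Primrec.snd.comp Primrec.snd)).to_comp.to₂)
    refine this.of_eq fun i => ?_
    induction i with
    | zero => simp [listPow]
    | succ n ih => rw [hwsucc]; exact congrArg (w ++ ·) ih
  have hF : Computable fun i : ℕ =>
      Nat.casesOn (motive := fun _ => Bool) i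
        (decide (∃ l ∈ L, ∃ x ∈ K, E (l ++ listPow w 0) = E x))
        (fun j => f (listPow w (j + 1))) := by
    exact Computable.nat_casesOn Computable.id (Computable.const _)
      ((hf.comp (hg.comp (Computable.succ.comp Computable.snd))).to₂)
  refine ComputablePred.computable_iff.mpr ⟨_, hF, funext fun i => ?_⟩
  cases i with
  | zero => exact (decide_eq_true_eq).symm
  | succ n =>
    have h1 := key n
    have h2 := congrFun hfp (listPow w (n + 1))
    exact propext (h1.trans (iff_of_eq h2))
end

section
/- Let H = Gp⟨x, y, z, t | tx = xt, xz = zx, zy = yz, y²x = xy⟩ and let X = {t, x, z, xy} be the indicated subset of H. Then (i) the submonoid of H generated by X is isomorphic to the trace monoid T(P_4), via an isomorphism sending t, x, z, xy (in this order) to the generators u₁, u₂, u₃, u₄ of T(P_4); and (ii) the subgroup of H generated by X is not isomorphic to the right-angled Artin group A(P_4). -/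
/-- The defining relations of the trace monoid `T(P_4)` of the path with four vertices:
consecutive generators commute. -/
def tracePathRel : FreeMonoid (Fin 4) → FreeMonoid (Fin 4) → Prop := fun p q =>
  ∃ i : Fin 3, p = FreeMonoid.of i.castSucc * FreeMonoid.of i.succ ∧
    q = FreeMonoid.of i.succ * FreeMonoid.of i.castSucc

/-- The trace monoid `T(P_4)`. -/
abbrev TP4 := PresentedMonoid tracePathRel

/-- Relators of the right-angled Artin group `A(P_4)`: consecutive generators commute. -/
def ap4Rels : Set (FreeGroup (Fin 4)) :=
  {r | ∃ i : Fin 3,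
    r = FreeGroup.of i.castSucc * FreeGroup.of i.succ *
        (FreeGroup.of i.succ * FreeGroup.of i.castSucc)⁻¹}

/-- The right-angled Artin group `A(P_4)`. -/
abbrev AP4 := PresentedGroup ap4Rels

/-- Relators of `H = Gp⟨x, y, z, t | tx = xt, xz = zx, zy = yz, y²x = xy⟩` where the
generators `0, 1, 2, 3` play the roles of `x, y, z, t` respectively. -/
def hRels : Set (FreeGroup (Fin 4)) :=
  { FreeGroup.of 3 * FreeGroup.of 0 * (FreeGroup.of 0 * FreeGroup.of 3)⁻¹,
    FreeGroup.of 0 * FreeGroup.of 2 * (FreeGroup.of 2 * FreeGroup.of 0)⁻¹,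
    FreeGroup.of 2 * FreeGroup.of 1 * (FreeGroup.of 1 * FreeGroup.of 2)⁻¹,
    (FreeGroup.of 1) ^ 2 * FreeGroup.of 0 * (FreeGroup.of 0 * FreeGroup.of 1)⁻¹ }

/-- The group `H = Gp⟨x, y, z, t | tx = xt, xz = zx, zy = yz, y²x = xy⟩`. -/
abbrev Hgrp := PresentedGroup hRels

/-- The generator `x` of `H`. -/
def Hgrp.x : Hgrp := PresentedGroup.of 0
/-- The generator `y` of `H`. -/
def Hgrp.y : Hgrp := PresentedGroup.of 1
/-- The generator `z` of `H`. -/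
def Hgrp.z : Hgrp := PresentedGroup.of 2
/-- The generator `t` of `H`. -/
def Hgrp.t : Hgrp := PresentedGroup.of 3

/-!
`T(P_4)` is the trace monoid in which exactly the pairs `{u₁, u₃}`, `{u₁, u₄}`, `{u₂, u₄}` do not
commute; by the projection lemma of trace theory, two words are equal in it once their projections
onto these pairs and onto single letters agree. Two representations of `H` by affine maps of
`ℚ[T, T⁻¹]` recover these projections: `ψ₁ : x ↦ 2a, y ↦ a + 1, z ↦ a, t ↦ Ta` sends `t, x, xy`
to `Ta, 2a, 2a + 2` and kills `z`, and `ψ₂ : x, y ↦ a, z ↦ 2a + 2, t ↦ Ta` sends `t, z` to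
`Ta, 2a + 2` and kills `x, xy`. A word in the affine maps `Xa, 2a, 2a + 2` of `ℤ[X]` has scale
`2 ^ length` at `X = 2`; at `X = 0` the map `Xa` is constant and the shift of a word is `2` modulo
`4` if it starts with `2a + 2` and `0` otherwise. Peeling off first letters, this recovers the
projections of the word onto `{Xa, 2a + 2}` and onto `{2a, 2a + 2}`.

For (ii), `{t, x, z, xy}` generates `H` because `y = x⁻¹ (xy)`, and the relation `y²x = xy` kills
`y` in every abelian quotient, so `H` has `8` homomorphisms to `ℤ/2` while `A(P_4)` has `16`.
-/

open Polynomial LaurentPolynomial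

namespace List

variable {α β M : Type*}

lemma exists_eq_replicate_append (b : α) (w : List α) :
    ∃ j rest, w = replicate j b ++ rest ∧ rest.head? ≠ some b := by
  induction w with
  | nil => exact ⟨0, [], rfl, by simp⟩
  | cons c w ih =>
    by_cases hc : c = b
    · obtain ⟨j, rest, rfl, hrest⟩ := ih
      exact ⟨j + 1, rest, by simp [hc, replicate_succ], hrest⟩
    · exact ⟨0, c :: w, rfl, by simpa using hc⟩

lemma map_filterMap_of_leftInvOn {κ : α → Option β} {ρ : β → α} (hρ : ∀ a, ∀ b ∈ κ a, ρ b = a)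
    (l : List α) : (l.filterMap κ).map ρ = l.filter (fun a => (κ a).isSome) := by
  induction l with
  | nil => rfl
  | cons a l ih =>
    cases h : κ a with
    | none => simp [h, ih]
    | some b => simp [h, ih, hρ a b h]

lemma filter_eq_of_filterMap_eq [Nonempty α] {κ : α → Option β}
    (hκ : ∀ a a' b, κ a = some b → κ a' = some b → a = a') {l l' : List α}
    (h : l.filterMap κ = l'.filterMap κ) :
    l.filter (fun a => (κ a).isSome) = l'.filter (fun a => (κ a).isSome) := by
  have hρ : ∀ a, ∀ b ∈ κ a, Function.invFun κ (some b) = a := fun a b hb =>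
    hκ _ _ b (Function.invFun_eq ⟨a, hb⟩) hb
  rw [← map_filterMap_of_leftInvOn hρ, h, map_filterMap_of_leftInvOn hρ]

lemma filter_eq_filter_of_imp {p q : α → Bool} {l l' : List α} (h : l.filter q = l'.filter q)
    (hpq : ∀ a, p a → q a) : l.filter p = l'.filter p := by
  have key : ∀ l : List α, l.filter p = (l.filter q).filter p := fun l => by
    rw [filter_filter]
    exact filter_congr fun a _ => by cases hp : p a <;> simp [hp, hpq a]
  rw [key l, key l', h]

/-- The projection lemma for trace monoids. -/
theorem prod_map_eq_of_forall_filter_eq [DecidableEq α] [Monoid M] {I : α → α → Prop}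
    (hI : ∀ a, ¬ I a a) {g : α → M} (hg : ∀ a b, I a b → Commute (g a) (g b)) {l l' : List α}
    (h : ∀ a b, ¬ I a b →
      l.filter (fun x => x = a ∨ x = b) = l'.filter (fun x => x = a ∨ x = b)) :
    (l.map g).prod = (l'.map g).prod := by
  induction l generalizing l' with
  | nil =>
    cases l' with
    | nil => rfl
    | cons b t => simpa using h b b (hI b)
  | cons a r ih =>
    have ha : a ∈ l' := by
      have := h a a (hI a)
      rw [filter_cons_of_pos (by simp)] at this
      exact mem_of_mem_filter (this ▸ mem_cons_self)
    obtain ⟨w, t, rfl, haw⟩ := eq_append_cons_of_mem ha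
    -- every projection through `a` starts with `a`, so it sees no letter of `w`
    have hw : ∀ c d, ¬ I c d → (a = c ∨ a = d) → w.filter (fun x => x = c ∨ x = d) = [] := by
      intro c d hcd hac
      have hproj := h c d hcd
      rw [filter_cons_of_pos (by simpa), filter_append, filter_cons_of_pos (by simpa)] at hproj
      cases hfw : w.filter (fun x => x = c ∨ x = d) with
      | nil => rfl
      | cons e _ =>
        rw [hfw, cons_append, cons.injEq] at hproj
        exact absurd (hproj.1 ▸ mem_of_mem_filter (hfw ▸ mem_cons_self)) haw
    have hcomm : ∀ b ∈ w, I a b := fun b hb => by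
      by_contra hab
      exact (filter_eq_nil_iff.1 (hw a b hab (Or.inl rfl)) b hb) (by simp)
    have hrest : ∀ c d, ¬ I c d →
        r.filter (fun x => x = c ∨ x = d) = (w ++ t).filter (fun x => x = c ∨ x = d) := by
      intro c d hcd
      have hproj := h c d hcd
      by_cases hac : a = c ∨ a = d
      · rw [filter_cons_of_pos (by simpa), filter_append, filter_cons_of_pos (by simpa),
          hw c d hcd hac, nil_append, cons.injEq] at hproj
        rw [filter_append, hw c d hcd hac, nil_append, hproj.2]
      · rwa [filter_cons_of_neg (by simpa using hac), filter_append,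
          filter_cons_of_neg (by simpa using hac),
          ← filter_append] at hproj
    rw [map_cons, prod_cons, ih hrest, map_append, prod_append, map_append, prod_append,
      map_cons, prod_cons, ← mul_assoc, ← mul_assoc,
      (Commute.list_prod_right _ _ fun _ hb => ?_ : Commute (g a) (w.map g).prod).eq]
    obtain ⟨b, hbw, rfl⟩ := mem_map.1 hb
    exact hg a b (hcomm b hbw)

end List

/-- The affine map `a ↦ scale * a + shift`; multiplication is composition. -/
@[ext] structure Aff (R : Type*) where
  scale : R
  shift : R

namespace Aff

variable {R S : Type*}

section Semiring

variable [Semiring R] [Semiring S]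

instance : Mul (Aff R) := ⟨fun f g => ⟨f.scale * g.scale, f.scale * g.shift + f.shift⟩⟩
instance : One (Aff R) := ⟨⟨1, 0⟩⟩

@[simp] lemma mul_scale (f g : Aff R) : (f * g).scale = f.scale * g.scale := rfl
@[simp] lemma mul_shift (f g : Aff R) : (f * g).shift = f.scale * g.shift + f.shift := rfl
@[simp] lemma one_scale : (1 : Aff R).scale = 1 := rfl
@[simp] lemma one_shift : (1 : Aff R).shift = 0 := rfl

instance : Monoid (Aff R) where
  mul_assoc f g h := by ext <;> simp [mul_add, mul_assoc, add_assoc]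
  one_mul f := by ext <;> simp
  mul_one f := by ext <;> simp

def map (φ : R →+* S) : Aff R →* Aff S where
  toFun f := ⟨φ f.scale, φ f.shift⟩
  map_one' := by ext <;> simp
  map_mul' f g := by ext <;> simp

@[simp] lemma map_scale (φ : R →+* S) (f : Aff R) : (map φ f).scale = φ f.scale := rfl
@[simp] lemma map_shift (φ : R →+* S) (f : Aff R) : (map φ f).shift = φ f.shift := rfl

lemma map_injective {φ : R →+* S} (hφ : Function.Injective φ) : Function.Injective (map φ) :=
  fun _ _ h => Aff.ext (hφ (congrArg scale h)) (hφ (congrArg shift h))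

end Semiring

lemma mul_left_cancel [Ring R] [IsLeftCancelMulZero R] {f g h : Aff R} (hf : f.scale ≠ 0)
    (hfg : f * g = f * h) : g = h := by
  have hs := congrArg scale hfg
  have ht := congrArg shift hfg
  simp only [mul_scale, mul_shift, add_left_inj] at hs ht
  exact Aff.ext (mul_left_cancel₀ hf hs) (mul_left_cancel₀ hf ht)

lemma isUnit_of_isUnit_scale [Ring R] {f : Aff R} (hf : IsUnit f.scale) : IsUnit f := by
  obtain ⟨u, hu⟩ := hf
  refine ⟨⟨f, ⟨↑u⁻¹, -(↑u⁻¹ * f.shift)⟩, ?_, ?_⟩, rfl⟩ <;> ext <;> simp [← hu, ← mul_assoc]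

noncomputable def translate [Ring R] (c : R) : (Aff R)ˣ :=
  (isUnit_of_isUnit_scale (f := ⟨1, c⟩) isUnit_one).unit

@[simp] lemma val_translate [Ring R] (c : R) : (translate c : Aff R) = ⟨1, c⟩ :=
  IsUnit.unit_spec _

end Aff

noncomputable def toRatLaurent : ℤ[X] →+* ℚ[T;T⁻¹] :=
  toLaurent.comp (mapRingHom (Int.castRingHom ℚ))

lemma toRatLaurent_injective : Function.Injective toRatLaurent :=
  toLaurent_injective.comp (map_injective _ Int.cast_injective)

inductive AffLetter
  | mulX | mulTwo | mulTwoAddTwo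
  deriving DecidableEq

namespace AffLetter

noncomputable def toAff : AffLetter → Aff ℤ[X]
  | mulX => ⟨X, 0⟩
  | mulTwo => ⟨2, 0⟩
  | mulTwoAddTwo => ⟨2, 2⟩

noncomputable def eval (w : List AffLetter) : Aff ℤ[X] := (w.map toAff).prod

@[simp] lemma eval_nil : eval [] = 1 := rfl
@[simp] lemma eval_cons (c : AffLetter) (w : List AffLetter) : eval (c :: w) = c.toAff * eval w :=
  List.prod_cons
@[simp] lemma eval_append (w w' : List AffLetter) : eval (w ++ w') = eval w * eval w' := by
  simp [eval]

lemma toAff_scale_ne_zero (c : AffLetter) : c.toAff.scale ≠ 0 := by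
  cases c <;> simp [toAff, X_ne_zero]

lemma eval_scale_eval_two (w : List AffLetter) : (eval w).scale.eval 2 = 2 ^ w.length := by
  induction w with
  | nil => simp
  | cons c w ih => cases c <;> simp [toAff, ih, pow_succ, mul_comm]

lemma length_eq_of_eval_eq {w w' : List AffLetter} (h : eval w = eval w') :
    w.length = w'.length := by
  have h2 := eval_scale_eval_two w
  rw [h, eval_scale_eval_two] at h2
  exact Nat.pow_right_injective le_rfl (by exact_mod_cast h2.symm)

lemma even_eval_shift_eval_zero (w : List AffLetter) : Even ((eval w).shift.eval 0) := by
  induction w with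
  | nil => simp
  | cons c w ih => cases c <;> simp [toAff, ih]

lemma eval_cons_shift_eval_zero_emod_four (c : AffLetter) (w : List AffLetter) :
    (eval (c :: w)).shift.eval 0 % 4 = if c = mulTwoAddTwo then 2 else 0 := by
  obtain ⟨k, hk⟩ := even_eval_shift_eval_zero w
  cases c <;> simp [toAff, hk] <;> omega

lemma eval_replicate_mulTwo_append (j : ℕ) (w : List AffLetter) :
    eval (List.replicate j mulTwo ++ w) = ⟨2 ^ j * (eval w).scale, 2 ^ j * (eval w).shift⟩ := by
  induction j with
  | zero => simp
  | succ j ih => ext <;> simp [List.replicate_succ, ih, toAff, pow_succ, mul_assoc, mul_left_comm]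

/-- At `X = 0` the map `mulX` is constant `0`, unlike `mulTwo ^ j` and
`mulTwo ^ j * mulTwoAddTwo * _`; so the first letter of `w` after its leading `mulTwo`s is `mulX`,
which commutes past them. -/
lemma exists_of_eval_mulX_cons_eq {r w : List AffLetter} (h : eval (mulX :: r) = eval w) :
    ∃ j t, w = List.replicate j mulTwo ++ mulX :: t ∧
      eval r = eval (List.replicate j mulTwo ++ t) := by
  obtain ⟨j, rest, rfl, hrest⟩ := List.exists_eq_replicate_append mulTwo w
  have hX : (eval (mulX :: r)).scale.eval 0 = 0 ∧ (eval (mulX :: r)).shift.eval 0 = 0 := by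
    simp [toAff]
  rw [h, eval_replicate_mulTwo_append] at hX
  match rest, hrest with
  | [], _ => simp at hX
  | mulTwo :: _, hrest => simp at hrest
  | mulTwoAddTwo :: t, _ =>
    have h4 := eval_cons_shift_eval_zero_emod_four mulTwoAddTwo t
    simp [toAff] at hX h4
    omega
  | mulX :: t, _ =>
    refine ⟨j, t, rfl, Aff.mul_left_cancel (toAff_scale_ne_zero mulX) ?_⟩
    rw [← eval_cons, h, eval_replicate_mulTwo_append, eval_replicate_mulTwo_append]
    refine Aff.ext ?_ ?_ <;> simp [toAff] <;> ring

lemma eval_eq_of_eval_cons_eq {c : AffLetter} {w w' : List AffLetter}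
    (h : eval (c :: w) = eval (c :: w')) : eval w = eval w' :=
  Aff.mul_left_cancel (toAff_scale_ne_zero c) h

theorem filter_eq_of_eval_eq {w w' : List AffLetter} (h : eval w = eval w') :
    w.filter (· ≠ mulTwo) = w'.filter (· ≠ mulTwo) ∧
      w.filter (· ≠ mulX) = w'.filter (· ≠ mulX) := by
  induction hn : w.length using Nat.strong_induction_on generalizing w w' with
  | _ n ih =>
  have hlen := length_eq_of_eval_eq h
  match w, w' with
  | [], [] => simp
  | [], _ :: _ | _ :: _, [] => simp at hlen
  | mulX :: r, w' =>
    obtain ⟨j, t, rfl, hr⟩ := exists_of_eval_mulX_cons_eq h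
    obtain ⟨h₁, h₂⟩ := ih r.length (by simp [← hn]) hr rfl
    simp [List.filter_append] at h₁ h₂ ⊢
    exact ⟨h₁, h₂⟩
  | w, mulX :: r' =>
    obtain ⟨j, t, rfl, hr⟩ := exists_of_eval_mulX_cons_eq h.symm
    obtain ⟨h₁, h₂⟩ := ih (j + t.length) (by simp [← hn]) hr.symm (by simp)
    simp [List.filter_append] at h₁ h₂ ⊢
    exact ⟨h₁, h₂⟩
  | mulTwo :: r, mulTwo :: r' | mulTwoAddTwo :: r, mulTwoAddTwo :: r' =>
    obtain ⟨h₁, h₂⟩ := ih r.length (by simp [← hn]) (eval_eq_of_eval_cons_eq h) rfl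
    simp at h₁ h₂ ⊢
    exact ⟨h₁, h₂⟩
  | mulTwo :: r, mulTwoAddTwo :: r' | mulTwoAddTwo :: r, mulTwo :: r' =>
    have h4 := congrArg (fun f : Aff ℤ[X] => f.shift.eval 0 % 4) h
    simp only [eval_cons_shift_eval_zero_emod_four] at h4
    simp at h4

lemma isUnit_map_toAff (c : AffLetter) : IsUnit (Aff.map toRatLaurent c.toAff) := by
  refine Aff.isUnit_of_isUnit_scale ?_
  cases c
  · simpa [toAff, toRatLaurent] using isUnit_T 1
  all_goals
    simp only [toAff, toRatLaurent, Aff.map_scale, map_ofNat]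
    rw [← map_ofNat LaurentPolynomial.C 2]
    exact (isUnit_of_invertible (2 : ℚ)).map _

noncomputable def toUnit (c : AffLetter) : (Aff ℚ[T;T⁻¹])ˣ := (isUnit_map_toAff c).unit

@[simp] lemma val_toUnit (c : AffLetter) :
    (c.toUnit : Aff ℚ[T;T⁻¹]) = Aff.map toRatLaurent c.toAff :=
  IsUnit.unit_spec _

end AffLetter

lemma PresentedGroup.mk_mul_eq_mk_mul {α : Type*} {rels : Set (FreeGroup α)}
    {a b c d : FreeGroup α} (h : a * b * (c * d)⁻¹ ∈ rels) :
    mk rels a * mk rels b = mk rels c * mk rels d := by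
  simpa using mk_eq_mk_of_mul_inv_mem h

namespace Hgrp

open AffLetter

lemma t_mul_x : t * x = x * t := PresentedGroup.mk_mul_eq_mk_mul (by simp [hRels])
lemma x_mul_z : x * z = z * x := PresentedGroup.mk_mul_eq_mk_mul (by simp [hRels])
lemma z_mul_y : z * y = y * z := PresentedGroup.mk_mul_eq_mk_mul (by simp [hRels])
lemma y_sq_mul_x : y ^ 2 * x = x * y := by
  have h := PresentedGroup.mk_mul_eq_mk_mul (rels := hRels) (a := .of 1 ^ 2) (b := .of 0)
    (c := .of 0) (d := .of 1) (by simp [hRels])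
  rwa [map_pow] at h

def lift {G : Type*} [Group G] (x' y' z' t' : G) (htx : t' * x' = x' * t')
    (hxz : x' * z' = z' * x') (hzy : z' * y' = y' * z') (hyx : y' ^ 2 * x' = x' * y') :
    Hgrp →* G :=
  PresentedGroup.toGroup (f := ![x', y', z', t']) <| by
    rintro r (rfl | rfl | rfl | rfl) <;> simp [*]

@[simp] lemma lift_x {G : Type*} [Group G] {x' y' z' t' : G} {htx hxz hzy hyx} :
    lift x' y' z' t' htx hxz hzy hyx x = x' := PresentedGroup.toGroup.of _
@[simp] lemma lift_y {G : Type*} [Group G] {x' y' z' t' : G} {htx hxz hzy hyx} :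
    lift x' y' z' t' htx hxz hzy hyx y = y' := PresentedGroup.toGroup.of _
@[simp] lemma lift_z {G : Type*} [Group G] {x' y' z' t' : G} {htx hxz hzy hyx} :
    lift x' y' z' t' htx hxz hzy hyx z = z' := PresentedGroup.toGroup.of _
@[simp] lemma lift_t {G : Type*} [Group G] {x' y' z' t' : G} {htx hxz hzy hyx} :
    lift x' y' z' t' htx hxz hzy hyx t = t' := PresentedGroup.toGroup.of _

lemma closure_eq_top : Subgroup.closure {t, x, z, x * y} = ⊤ := by
  set S := Subgroup.closure {t, x, z, x * y}
  have ht : t ∈ S := Subgroup.subset_closure (by simp)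
  have hx : x ∈ S := Subgroup.subset_closure (by simp)
  have hz : z ∈ S := Subgroup.subset_closure (by simp)
  have hy : y ∈ S := by
    simpa using mul_mem (inv_mem hx) (Subgroup.subset_closure (by simp) : x * y ∈ S)
  rw [eq_top_iff, ← PresentedGroup.closure_range_of, Subgroup.closure_le]
  rintro _ ⟨i, rfl⟩
  fin_cases i
  exacts [hx, hy, hz, ht]

lemma map_y_eq_one {G : Type*} [CommGroup G] (f : Hgrp →* G) : f y = 1 := by
  have h := congrArg f y_sq_mul_x
  simp only [map_mul, map_pow, mul_comm (f x)] at h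
  simpa [pow_two] using h

def homEquiv (G : Type*) [CommGroup G] : (Hgrp →* G) ≃ G × G × G where
  toFun f := (f x, f z, f t)
  invFun g := lift g.1 1 g.2.1 g.2.2 (mul_comm _ _) (mul_comm _ _) (mul_comm _ _) (by simp)
  left_inv f := by
    refine PresentedGroup.ext fun i => ?_
    fin_cases i
    · exact lift_x
    · exact lift_y.trans (map_y_eq_one f).symm
    · exact lift_z
    · exact lift_t
  right_inv g := by simp

def traceGen : Fin 4 → Hgrp := ![t, x, z, x * y]

lemma z_mul_xy : z * (x * y) = x * y * z := by
  rw [← mul_assoc, ← x_mul_z, mul_assoc, z_mul_y, mul_assoc]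

noncomputable def affRep₁ : Hgrp →* (Aff ℚ[T;T⁻¹])ˣ :=
  lift mulTwo.toUnit (Aff.translate 1) 1 mulX.toUnit
    (Units.ext <| Aff.ext (by simp [toAff, mul_comm]) (by simp [toAff]))
    (by simp) (by simp)
    (Units.ext <| Aff.ext (by simp [pow_two]) (by norm_num [toAff, pow_two, map_ofNat]))

noncomputable def affRep₂ : Hgrp →* (Aff ℚ[T;T⁻¹])ˣ :=
  lift 1 1 mulTwoAddTwo.toUnit mulX.toUnit (by simp) (by simp) (by simp) (by simp)

-- The letters to which `affRep₁` and `affRep₂` send `t, x, z, xy`; `none` is the identity.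
def letter₁ : Fin 4 → Option AffLetter := ![some mulX, some mulTwo, none, some mulTwoAddTwo]

def letter₂ : Fin 4 → Option AffLetter := ![some mulX, none, some mulTwoAddTwo, none]

lemma val_prod_map_traceGen {ψ : Hgrp →* (Aff ℚ[T;T⁻¹])ˣ} {κ : Fin 4 → Option AffLetter}
    (hψ : ∀ i, (ψ (traceGen i) : Aff ℚ[T;T⁻¹]) = Aff.map toRatLaurent (eval (κ i).toList))
    (l : List (Fin 4)) :
    (ψ (l.map traceGen).prod : Aff ℚ[T;T⁻¹]) = Aff.map toRatLaurent (eval (l.filterMap κ)) := by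
  induction l with
  | nil => simp
  | cons i l ih =>
    cases h : κ i <;> simp_all

lemma val_affRep₁_traceGen (i : Fin 4) :
    (affRep₁ (traceGen i) : Aff ℚ[T;T⁻¹]) = Aff.map toRatLaurent (eval (letter₁ i).toList) := by
  fin_cases i <;> refine Aff.ext ?_ ?_ <;> simp [traceGen, affRep₁, letter₁, toAff]

lemma val_affRep₂_traceGen (i : Fin 4) :
    (affRep₂ (traceGen i) : Aff ℚ[T;T⁻¹]) = Aff.map toRatLaurent (eval (letter₂ i).toList) := by
  fin_cases i <;> simp [traceGen, affRep₂, letter₂]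

lemma eval_filterMap_eq_of_prod_traceGen_eq {ψ : Hgrp →* (Aff ℚ[T;T⁻¹])ˣ}
    {κ : Fin 4 → Option AffLetter}
    (hψ : ∀ i, (ψ (traceGen i) : Aff ℚ[T;T⁻¹]) = Aff.map toRatLaurent (eval (κ i).toList))
    {l l' : List (Fin 4)} (h : (l.map traceGen).prod = (l'.map traceGen).prod) :
    eval (l.filterMap κ) = eval (l'.filterMap κ) :=
  Aff.map_injective toRatLaurent_injective <| by
    rw [← val_prod_map_traceGen hψ, h, val_prod_map_traceGen hψ]

-- `[0, 3]`, `[1, 3]`, `[0, 2]` are the non-commuting pairs `{t, xy}`, `{x, xy}`, `{t, z}`.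
lemma filter_eq_of_prod_traceGen_eq {l l' : List (Fin 4)}
    (h : (l.map traceGen).prod = (l'.map traceGen).prod) :
    ∀ S ∈ [[0, 3], [1, 3], [0, 2]], l.filter (· ∈ S) = l'.filter (· ∈ S) := by
  obtain ⟨h03, h13⟩ := filter_eq_of_eval_eq
    (eval_filterMap_eq_of_prod_traceGen_eq val_affRep₁_traceGen h)
  obtain ⟨h02, -⟩ := filter_eq_of_eval_eq
    (eval_filterMap_eq_of_prod_traceGen_eq val_affRep₂_traceGen h)
  rw [List.filter_filterMap, List.filter_filterMap] at h03 h13 h02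
  simp only [List.mem_cons, List.not_mem_nil, or_false, forall_eq_or_imp, forall_eq]
  exact ⟨List.filter_eq_filter_of_imp (List.filter_eq_of_filterMap_eq (by decide) h03) (by decide),
    List.filter_eq_filter_of_imp (List.filter_eq_of_filterMap_eq (by decide) h13) (by decide),
    List.filter_eq_filter_of_imp (List.filter_eq_of_filterMap_eq (by decide) h02) (by decide)⟩

end Hgrp

namespace AP4

def homEquiv (G : Type*) [CommGroup G] : (AP4 →* G) ≃ (Fin 4 → G) where
  toFun f i := f (PresentedGroup.of i)
  invFun g := PresentedGroup.toGroup (f := g) <| by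
    rintro _ ⟨i, rfl⟩
    simp only [map_mul, map_inv, FreeGroup.lift_apply_of]
    exact mul_inv_eq_one.2 (mul_comm _ _)
  left_inv f := PresentedGroup.ext fun _ => PresentedGroup.toGroup.of _
  right_inv g := funext fun _ => PresentedGroup.toGroup.of _

end AP4

lemma SimpleGraph.pathGraph_four_exists_mem_of_not_adj :
    ∀ a b : Fin 4, ¬ (pathGraph 4).Adj a b → ∃ S ∈ [[0, 3], [1, 3], [0, 2]], a ∈ S ∧ b ∈ S := by
  simp only [pathGraph_adj]
  decide

namespace TP4

open Hgrp in
def toHgrp : TP4 →* Hgrp :=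
  PresentedMonoid.lift traceGen <| by
    rintro _ _ ⟨i, rfl, rfl⟩
    fin_cases i <;> simp [traceGen, t_mul_x, x_mul_z, z_mul_xy]

lemma mk_eq_prod (a : FreeMonoid (Fin 4)) :
    PresentedMonoid.mk tracePathRel a = (a.toList.map (PresentedMonoid.of tracePathRel)).prod := by
  rw [← FreeMonoid.lift_apply]
  exact DFunLike.congr_fun (FreeMonoid.hom_eq (f := PresentedMonoid.mk tracePathRel)
    (g := FreeMonoid.lift (PresentedMonoid.of tracePathRel)) fun _ => rfl) a

lemma toHgrp_mk (a : FreeMonoid (Fin 4)) :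
    toHgrp (PresentedMonoid.mk tracePathRel a) = (a.toList.map Hgrp.traceGen).prod :=
  FreeMonoid.lift_apply _ _

lemma commute_of_adj {a b : Fin 4} (h : (SimpleGraph.pathGraph 4).Adj a b) :
    Commute (PresentedMonoid.of tracePathRel a) (PresentedMonoid.of tracePathRel b) := by
  have key (i : Fin 3) : Commute (PresentedMonoid.of tracePathRel i.castSucc)
      (PresentedMonoid.of tracePathRel i.succ) :=
    PresentedMonoid.mk_eq_mk_of_rel ⟨i, rfl, rfl⟩
  rcases SimpleGraph.pathGraph_adj.1 h with h | h
  · obtain ⟨i, rfl, rfl⟩ : ∃ i : Fin 3, i.castSucc = a ∧ i.succ = b :=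
      ⟨⟨a, by omega⟩, rfl, Fin.ext (by simp [← h])⟩
    exact key i
  · obtain ⟨i, rfl, rfl⟩ : ∃ i : Fin 3, i.castSucc = b ∧ i.succ = a :=
      ⟨⟨b, by omega⟩, rfl, Fin.ext (by simp [← h])⟩
    exact (key i).symm

theorem toHgrp_injective : Function.Injective toHgrp := by
  intro a b hab
  induction a using PresentedMonoid.inductionOn
  induction b using PresentedMonoid.inductionOn
  rw [toHgrp_mk, toHgrp_mk] at hab
  rw [mk_eq_prod, mk_eq_prod]
  refine List.prod_map_eq_of_forall_filter_eq (fun _ => (SimpleGraph.pathGraph 4).irrefl)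
    (fun _ _ => commute_of_adj) fun a b hadj => ?_
  obtain ⟨S, hS, ha, hb⟩ := SimpleGraph.pathGraph_four_exists_mem_of_not_adj a b hadj
  refine List.filter_eq_filter_of_imp (Hgrp.filter_eq_of_prod_traceGen_eq hab S hS) ?_
  rintro c hc
  rcases of_decide_eq_true hc with rfl | rfl <;> simpa

lemma mrange_toHgrp :
    MonoidHom.mrange toHgrp = Submonoid.closure {Hgrp.t, Hgrp.x, Hgrp.z, Hgrp.x * Hgrp.y} := by
  rw [MonoidHom.mrange_eq_map, ← PresentedMonoid.closure_range_of, MonoidHom.map_mclosure,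
    ← Set.range_comp]
  congr 1
  ext g
  simp [Fin.exists_fin_succ, Hgrp.traceGen, toHgrp, eq_comm]

end TP4

theorem Hgrp.isEmpty_closure_mulEquiv_AP4 :
    IsEmpty (Subgroup.closure {Hgrp.t, Hgrp.x, Hgrp.z, Hgrp.x * Hgrp.y} ≃* AP4) := by
  refine ⟨fun e => ?_⟩
  let C₂ := Multiplicative (ZMod 2)
  have hC₂ : Nat.card C₂ = 2 := by simp [C₂]
  have e' : Hgrp ≃* AP4 :=
    (Subgroup.topEquiv.symm.trans (MulEquiv.subgroupCongr Hgrp.closure_eq_top.symm)).trans e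
  have := Nat.card_congr
    (((Hgrp.homEquiv C₂).symm.trans e'.monoidHomCongrLeftEquiv).trans (AP4.homEquiv C₂))
  rw [Nat.card_prod, Nat.card_prod, Nat.card_fun, hC₂, Nat.card_fin] at this
  norm_num at this

/-- In `H = Gp⟨x, y, z, t | tx = xt, xz = zx, zy = yz, y²x = xy⟩`, the submonoid
generated by `X = {t, x, z, xy}` is isomorphic to the trace monoid `T(P_4)` (via an
isomorphism matching `t, x, z, xy` with `u₁, u₂, u₃, u₄` in order), whereas the subgroup
generated by `X` is not isomorphic to the right-angled Artin group `A(P_4)`. -/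
theorem hgrp_embeds_TP4_but_subgroup_not_AP4 :
    (∃ φ : TP4 →* Hgrp,
      Function.Injective φ ∧
      φ (PresentedMonoid.of tracePathRel 0) = Hgrp.t ∧
      φ (PresentedMonoid.of tracePathRel 1) = Hgrp.x ∧
      φ (PresentedMonoid.of tracePathRel 2) = Hgrp.z ∧
      φ (PresentedMonoid.of tracePathRel 3) = Hgrp.x * Hgrp.y ∧
      MonoidHom.mrange φ =
        Submonoid.closure {Hgrp.t, Hgrp.x, Hgrp.z, Hgrp.x * Hgrp.y}) ∧
    IsEmpty
      (↥(Subgroup.closure {Hgrp.t, Hgrp.x, Hgrp.z, Hgrp.x * Hgrp.y}) ≃* AP4) :=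
  ⟨⟨TP4.toHgrp, TP4.toHgrp_injective, rfl, rfl, rfl, rfl, TP4.mrange_toHgrp⟩,
    Hgrp.isEmpty_closure_mulEquiv_AP4⟩
end
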